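/- arXiv:2602.13794 — 6 statements merged into one kernel-verified Lean document; each statement's English description precedes it below -/
import Mathlib

section
/- Let A be a ring, Σ a complex of projective A-modules concentrated in degrees -n,...,0, and D_Σ the class of modules X with Hom_{D(A)}(Σ, X[i]) = 0 for all i > 0. If a module M admits an exact sequence C_{n-1} → ... → C_0 → M → 0 with each C_j ∈ D_Σ, then M ∈ D_Σ. That is, Pres^{n-1}(D_Σ) ⊆ D_Σ. -/
/-!
A bounded-above complex `S` of projectives is K-projective, so morphisms `S ⟶ X[i]` in `D(A)` are
homotopy classes of chain maps; as `S` vanishes in degrees `< -n`, they are zero for `i > n`.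
Let `K₀ = M` and let `Kₘ₊₁` be the kernel of `Cₘ ↠ Kₘ`. The distinguished triangle of
`0 → Kₘ₊₁ → Cₘ → Kₘ → 0` and `Cₘ ∈ D_S` show that if `Hom(S, Kₘ₊₁[i]) = 0` for `i > m + 1` then
`Hom(S, Kₘ[i]) = 0` for `i > m`. Descending from `m = n` gives `M = K₀ ∈ D_S`.
-/

open CategoryTheory Limits DerivedCategory Pretriangulated

universe v u

namespace CategoryTheory.Pretriangulated

variable {D : Type*} [Category D] [Preadditive D] [HasZeroObject D] [HasShift D ℤ]
  [∀ n : ℤ, (shiftFunctor D n).Additive] [Pretriangulated D]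

lemma hom_shift_obj₃_eq_zero {T : Triangle D} (hT : T ∈ distTriang D) {E : D} {i : ℤ}
    (h₂ : ∀ f : E ⟶ T.obj₂⟦i⟧, f = 0) (h₁ : ∀ f : E ⟶ T.obj₁⟦i + 1⟧, f = 0)
    (φ : E ⟶ T.obj₃⟦i⟧) : φ = 0 := by
  have hφ : φ ≫ (T⟦i⟧).mor₃ = 0 := by
    let e : (T.obj₁⟦i⟧)⟦(1 : ℤ)⟧ ≅ T.obj₁⟦i + 1⟧ := (shiftFunctorAdd' D i 1 (i + 1) rfl).symm.app _
    exact (cancel_mono e.hom).1 ((h₁ _).trans zero_comp.symm)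
  obtain ⟨g, rfl⟩ := Triangle.coyoneda_exact₃ _ (Triangle.shift_distinguished T hT i) φ hφ
  exact (congrArg (· ≫ _) (h₂ g)).trans zero_comp

end CategoryTheory.Pretriangulated

namespace DerivedCategory

variable {C : Type*} [Category C] [Abelian C] [HasDerivedCategory C]

/-- `X ∈ D_S` is `HomVanishesAbove (Q.obj S) 0 X`. -/
def HomVanishesAbove (E : DerivedCategory C) (k : ℤ) (X : C) : Prop :=
  ∀ i : ℤ, k < i → ∀ φ : E ⟶ ((singleFunctor C 0).obj X)⟦i⟧, φ = 0

lemma HomVanishesAbove.mono {E : DerivedCategory C} {k l : ℤ} {X : C}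
    (h : HomVanishesAbove E k X) (hkl : k ≤ l) : HomVanishesAbove E l X :=
  fun i hi ↦ h i (hkl.trans_lt hi)

lemma HomVanishesAbove.of_shortExact {E : DerivedCategory C} {k : ℤ} {S : ShortComplex C}
    (hS : S.ShortExact) (h₂ : HomVanishesAbove E k S.X₂) (h₁ : HomVanishesAbove E (k + 1) S.X₁) :
    HomVanishesAbove E k S.X₃ :=
  fun i hi ↦
    hom_shift_obj₃_eq_zero hS.singleTriangle_distinguished (h₂ i hi) (h₁ (i + 1) (by omega))

lemma hom_eq_zero_of_isKProjective (K L : CochainComplex C ℤ) [K.IsKProjective]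
    (h : ∀ j, IsZero (K.X j) ∨ IsZero (L.X j)) (φ : Q.obj K ⟶ Q.obj L) : φ = 0 := by
  let e := quotientCompQhIso C
  obtain ⟨ψ, hψ⟩ := (CochainComplex.IsKProjective.Qh_map_bijective K _).surjective
    (e.hom.app K ≫ φ ≫ e.inv.app L)
  obtain ⟨f, rfl⟩ := (HomotopyCategory.quotient C _).map_surjective ψ
  have hf : f = 0 := by
    ext j
    exact (h j).elim (·.eq_of_src _ _) (·.eq_of_tgt _ _)
  rw [← cancel_epi (e.hom.app K), ← cancel_mono (e.inv.app L), Category.assoc, ← hψ, hf]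
  simp

lemma homVanishesAbove_of_isStrictlyGE (K : CochainComplex C ℤ) [K.IsKProjective] (a : ℤ)
    [K.IsStrictlyGE a] (X : C) : HomVanishesAbove (Q.obj K) (-a) X := by
  intro i hi φ
  let e := ((singleFunctors C).shiftIso i (-i) 0 (by omega)).app X
  rw [← cancel_mono e.hom, zero_comp]
  refine hom_eq_zero_of_isKProjective K ((CochainComplex.singleFunctor C (-i)).obj X) (fun j ↦ ?_) _
  by_cases hj : j = -i
  · exact .inl (K.isZero_of_isStrictlyGE a j (by omega))
  · exact .inr (HomologicalComplex.isZero_single_obj_X _ _ _ _ hj)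

end DerivedCategory

namespace ModuleCat

variable {A : Type*} [Ring A]

section

variable {P Q R : Type v} [AddCommGroup P] [Module A P] [AddCommGroup Q] [Module A Q]
  [AddCommGroup R] [Module A R] {u : P →ₗ[A] Q} {w : Q →ₗ[A] R}

noncomputable def shortComplexKerOfExact (huw : Function.Exact u w) :
    ShortComplex (ModuleCat.{v} A) :=
  shortComplexOfCompEqZero (LinearMap.ker u).subtype
    (u.codRestrict (LinearMap.ker w) huw.apply_apply_eq_zero)
    (LinearMap.ext fun x ↦ Subtype.ext x.2)

lemma shortExact_shortComplexKerOfExact (huw : Function.Exact u w) :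
    (shortComplexKerOfExact huw).ShortExact := by
  refine shortComplex_shortExact _ (fun x ↦ ?_) Subtype.val_injective ?_
  · exact ⟨fun h ↦ ⟨⟨x, congrArg Subtype.val h⟩, rfl⟩, fun ⟨y, hy⟩ ↦ hy ▸ Subtype.ext y.2⟩
  · rintro ⟨y, hy⟩
    obtain ⟨x, rfl⟩ := (huw y).1 hy
    exact ⟨x, rfl⟩

end

variable {C : ℕ → ModuleCat.{v} A} {M : ModuleCat.{v} A}

/-- `syzygy d e (m + 1)` is the kernel of the surjection `C m ↠ syzygy d e m` induced by `d`
(or by `e` for `m = 0`). -/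
def syzygy (d : ∀ j, C (j + 1) →ₗ[A] C j) (e : C 0 →ₗ[A] M) : ℕ → ModuleCat.{v} A
  | 0 => M
  | 1 => of A (LinearMap.ker e)
  | m + 2 => of A (LinearMap.ker (d m))

lemma homVanishesAbove_syzygy [HasDerivedCategory (ModuleCat.{v} A)]
    {E : DerivedCategory (ModuleCat.{v} A)} {d : ∀ j, C (j + 1) →ₗ[A] C j} {e : C 0 →ₗ[A] M}
    {n m : ℕ} (hm : m < n) {k : ℤ} (he : Function.Surjective e)
    (hde : 2 ≤ n → Function.Exact (d 0) e)
    (hdd : ∀ j, j + 3 ≤ n → Function.Exact (d (j + 1)) (d j))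
    (hC : HomVanishesAbove E k (C m)) (h : HomVanishesAbove E (k + 1) (syzygy d e (m + 1))) :
    HomVanishesAbove E k (syzygy d e m) :=
  match m with
  | 0 => hC.of_shortExact (LinearMap.shortExact_shortComplexKer he) h
  | 1 => hC.of_shortExact (shortExact_shortComplexKerOfExact (hde (by omega))) h
  | j + 2 => hC.of_shortExact (shortExact_shortComplexKerOfExact (hdd j (by omega))) h

end ModuleCat

theorem stmt2_general {A : Type u} [Ring A] [HasDerivedCategory.{u} (ModuleCat.{u} A)]
    (n : ℕ) (S : CochainComplex (ModuleCat.{u} A) ℤ)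
    (hSb : ∀ i : ℤ, (i < -(n : ℤ) ∨ 0 < i) → IsZero (S.X i))
    (hSp : ∀ i : ℤ, Projective (S.X i))
    (M : ModuleCat.{u} A)
    (hM : ∃ (C : ℕ → ModuleCat.{u} A)
        (d : ∀ j : ℕ, C (j + 1) →ₗ[A] C j) (e : C 0 →ₗ[A] M),
      (∀ j < n, ∀ i : ℤ, 0 < i →
          ∀ φ : Q.obj S ⟶ ((singleFunctor (ModuleCat.{u} A) 0).obj (C j))⟦i⟧, φ = 0) ∧
      Function.Surjective e ∧ (2 ≤ n → Function.Exact (d 0) e) ∧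
      (∀ j : ℕ, j + 3 ≤ n → Function.Exact (d (j + 1)) (d j))) :
    ∀ i : ℤ, 0 < i →
      ∀ φ : Q.obj S ⟶ ((singleFunctor (ModuleCat.{u} A) 0).obj M)⟦i⟧, φ = 0 := by
  obtain ⟨C, d, e, hC, he, hde, hdd⟩ := hM
  have : S.IsStrictlyLE 0 := by
    rw [CochainComplex.isStrictlyLE_iff]
    exact fun j hj ↦ hSb j (.inr hj)
  have : S.IsStrictlyGE (-n) := by
    rw [CochainComplex.isStrictlyGE_iff]
    exact fun j hj ↦ hSb j (.inl hj)
  have := CochainComplex.isKProjective_of_projective S 0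
  have hsyz (m : ℕ) (hm : m ≤ n) : HomVanishesAbove (Q.obj S) m (ModuleCat.syzygy d e m) := by
    induction hm using Nat.decreasingInduction with
    | self => simpa using homVanishesAbove_of_isStrictlyGE S (-n) (ModuleCat.syzygy d e n)
    | of_succ m hm ih =>
      exact ModuleCat.homVanishesAbove_syzygy hm he hde hdd
        (HomVanishesAbove.mono (hC m hm) m.cast_nonneg) (by exact_mod_cast ih)
  exact_mod_cast hsyz 0 n.zero_le

/-- Let `S` be a complex of projective `A`-modules concentrated in degrees
`-n,...,0` and `D_S = {X | Hom_{D(A)}(S, X[i]) = 0 ∀ i > 0}`. If a module `M` admits an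
exact sequence `C_{n-1} → ... → C_0 → M → 0` with each `C_j ∈ D_S`, then `M ∈ D_S`,
i.e. `Pres^{n-1}(D_S) ⊆ D_S`. -/
theorem stmt2 {A : Type u} [Ring A] [HasDerivedCategory.{u} (ModuleCat.{u} A)]
    (n : ℕ) (hn : 0 < n) (S : CochainComplex (ModuleCat.{u} A) ℤ)
    (hSb : ∀ i : ℤ, (i < -(n : ℤ) ∨ 0 < i) → IsZero (S.X i))
    (hSp : ∀ i : ℤ, Projective (S.X i))
    (M : ModuleCat.{u} A)
    (hM : ∃ (C : ℕ → ModuleCat.{u} A)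
        (d : ∀ j : ℕ, C (j + 1) →ₗ[A] C j) (e : C 0 →ₗ[A] M),
      (∀ j < n, ∀ i : ℤ, 0 < i →
          ∀ φ : Q.obj S ⟶ ((singleFunctor (ModuleCat.{u} A) 0).obj (C j))⟦i⟧, φ = 0) ∧
      Function.Surjective e ∧ (2 ≤ n → Function.Exact (d 0) e) ∧
      (∀ j : ℕ, j + 3 ≤ n → Function.Exact (d (j + 1)) (d j))) :
    ∀ i : ℤ, 0 < i →
      ∀ φ : Q.obj S ⟶ ((singleFunctor (ModuleCat.{u} A) 0).obj M)⟦i⟧, φ = 0 :=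
  stmt2_general n S hSb hSp M hM
end

section
/- Let R be a ring, X an R-module of projective dimension at most n, and set B = X^{⊥∞} (the class of modules N with Ext^i_R(X,N)=0 for all i>0) and A = {}^{⊥∞}B. Let 𝒳 = A ∩ B. Then a module M belongs to B if and only if M admits an 𝒳-resolution, i.e., an exact sequence ... → E_1 → E_0 → M → 0 with all E_i ∈ 𝒳. In particular, if 𝒳 is closed under direct sums, then B is closed under direct sums. -/
open CategoryTheory Limits CategoryTheory.Abelian

universe u

section Stmt3Aux

variable {R : Type u} [Ring R]

/-- The short complex `ker g → M → N` associated with a linear map `g : M → N`. -/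
noncomputable def Stmt3.sesOf {M N : ModuleCat.{u} R} (g : M →ₗ[R] N) :
    ShortComplex (ModuleCat.{u} R) :=
  ShortComplex.moduleCatMk (LinearMap.ker g).subtype g (by ext x; exact x.2)

lemma Stmt3.sesOf_shortExact {M N : ModuleCat.{u} R} (g : M →ₗ[R] N)
    (hg : Function.Surjective g) : (Stmt3.sesOf g).ShortExact := by
  have hm : Mono (Stmt3.sesOf g).f := by
    rw [ModuleCat.mono_iff_injective]
    exact Subtype.val_injective
  have he : Epi (Stmt3.sesOf g).g := by
    rw [ModuleCat.epi_iff_surjective]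
    exact hg
  refine ⟨?_⟩
  rw [ShortComplex.moduleCat_exact_iff]
  intro x hx
  exact ⟨⟨x, hx⟩, rfl⟩

lemma Stmt3.sub₂ {S : ShortComplex (ModuleCat.{u} R)} (hS : S.ShortExact)
    [HasExt.{u} (ModuleCat.{u} R)] (X : ModuleCat.{u} R) (i : ℕ)
    (h1 : Subsingleton (Ext X S.X₁ i)) (h3 : Subsingleton (Ext X S.X₃ i)) :
    Subsingleton (Ext X S.X₂ i) := by
  have h : ∀ x : Ext X S.X₂ i, x = 0 := by
    intro x
    obtain ⟨x₁, hx₁⟩ := Ext.covariant_sequence_exact₂ X hS x (Subsingleton.elim _ _)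
    rw [← hx₁, Subsingleton.elim x₁ 0, Ext.zero_comp]
  exact ⟨fun a b => by rw [h a, h b]⟩

lemma Stmt3.sub₃ {S : ShortComplex (ModuleCat.{u} R)} (hS : S.ShortExact)
    [HasExt.{u} (ModuleCat.{u} R)] (X : ModuleCat.{u} R) (i : ℕ)
    (h2 : Subsingleton (Ext X S.X₂ i)) (h1 : Subsingleton (Ext X S.X₁ (i + 1))) :
    Subsingleton (Ext X S.X₃ i) := by
  have h : ∀ x : Ext X S.X₃ i, x = 0 := by
    intro x
    obtain ⟨x₂, hx₂⟩ := Ext.covariant_sequence_exact₃ X hS x rfl (Subsingleton.elim _ _)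
    rw [← hx₂, Subsingleton.elim x₂ 0, Ext.zero_comp]
  exact ⟨fun a b => by rw [h a, h b]⟩

variable {ι : Type u} {M N P : ι → Type u}
  [∀ i, AddCommGroup (M i)] [∀ i, AddCommGroup (N i)] [∀ i, AddCommGroup (P i)]
  [∀ i, Module R (M i)] [∀ i, Module R (N i)] [∀ i, Module R (P i)]

lemma Stmt3.mapRange_surjective (χ : ∀ i, M i →ₗ[R] N i)
    (h : ∀ i, Function.Surjective (χ i)) :
    Function.Surjective (DFinsupp.mapRange.linearMap χ) := by
  classical
  intro y
  refine ⟨DFinsupp.mk y.support (fun i => (h i.1 (y i.1)).choose), ?_⟩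
  ext i
  rw [DFinsupp.mapRange.linearMap_apply, DFinsupp.mapRange_apply]
  by_cases hi : i ∈ y.support
  · rw [DFinsupp.mk_apply, dif_pos hi]
    exact (h i (y i)).choose_spec
  · rw [DFinsupp.mk_apply, dif_neg hi, map_zero]
    exact (DFinsupp.notMem_support_iff.mp hi).symm

lemma Stmt3.mapRange_exact (ψ : ∀ i, M i →ₗ[R] N i) (χ : ∀ i, N i →ₗ[R] P i)
    (h : ∀ i, Function.Exact (ψ i) (χ i)) :
    Function.Exact (DFinsupp.mapRange.linearMap ψ) (DFinsupp.mapRange.linearMap χ) := by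
  classical
  intro y
  constructor
  · intro h0
    have hc : ∀ i, ∃ a, ψ i a = y i := by
      intro i
      refine (h i (y i)).mp ?_
      have := DFinsupp.ext_iff.mp h0 i
      rwa [DFinsupp.mapRange.linearMap_apply, DFinsupp.mapRange_apply] at this
    refine ⟨DFinsupp.mk y.support (fun i => (hc i.1).choose), ?_⟩
    ext i
    rw [DFinsupp.mapRange.linearMap_apply, DFinsupp.mapRange_apply]
    by_cases hi : i ∈ y.support
    · rw [DFinsupp.mk_apply, dif_pos hi]
      exact (hc i).choose_spec
    · rw [DFinsupp.mk_apply, dif_neg hi, map_zero]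
      exact (DFinsupp.notMem_support_iff.mp hi).symm
  · rintro ⟨x, rfl⟩
    ext i
    rw [DFinsupp.mapRange.linearMap_apply, DFinsupp.mapRange_apply,
      DFinsupp.mapRange.linearMap_apply, DFinsupp.mapRange_apply]
    exact (h i).apply_apply_eq_zero (x i)

end Stmt3Aux

/-- Let `X` be an `R`-module of projective dimension at most `n`,
`B = X^{⊥∞}`, `A = ^{⊥∞}B` and `𝒳 = A ∩ B`.  Assuming the cotorsion pair generated by `X`
is complete (special precovers with kernels in `B` exist), a module `M` belongs to `B` iff
it admits an `𝒳`-resolution; in particular if `𝒳` is closed under direct sums then so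
is `B`. -/
theorem stmt3 {R : Type u} [Ring R] [HasExt.{u} (ModuleCat.{u} R)]
    (n : ℕ) (X : ModuleCat.{u} R)
    (hpd : ∀ (N : ModuleCat.{u} R) (i : ℕ), n < i → Subsingleton (Ext X N i))
    (B : ModuleCat.{u} R → Prop)
    (hB : ∀ N, B N ↔ ∀ i : ℕ, 0 < i → Subsingleton (Ext X N i))
    (Acl : ModuleCat.{u} R → Prop)
    (hA : ∀ N, Acl N ↔ ∀ M, B M → ∀ i : ℕ, 0 < i → Subsingleton (Ext N M i))
    (hcomplete : ∀ M : ModuleCat.{u} R, ∃ (P : ModuleCat.{u} R) (g : P →ₗ[R] M),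
      Function.Surjective g ∧ Acl P ∧ B (ModuleCat.of R (LinearMap.ker g))) :
    (∀ M : ModuleCat.{u} R, B M ↔
      ∃ (E : ℕ → ModuleCat.{u} R) (_ : ∀ j, Acl (E j) ∧ B (E j))
        (d : ∀ j : ℕ, E (j + 1) →ₗ[R] E j) (e : E 0 →ₗ[R] M),
        Function.Surjective e ∧ Function.Exact (d 0) e ∧
          ∀ j : ℕ, Function.Exact (d (j + 1)) (d j)) ∧
    ((∀ (ι : Type u) (f : ι → ModuleCat.{u} R), (∀ i, Acl (f i) ∧ B (f i)) →
        (Acl (ModuleCat.of R (DirectSum ι (fun i => ↥(f i)))) ∧ B (ModuleCat.of R (DirectSum ι (fun i => ↥(f i)))))) →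
      ∀ (ι : Type u) (f : ι → ModuleCat.{u} R), (∀ i, B (f i)) →
        B (ModuleCat.of R (DirectSum ι (fun i => ↥(f i))))) := by
  classical
  -- extension closure of `B`
  have extcl : ∀ {M N : ModuleCat.{u} R} (g : M →ₗ[R] N), Function.Surjective g →
      B (ModuleCat.of R (LinearMap.ker g)) → B N → B M := by
    intro M N g hg hker hN
    rw [hB]
    intro i hi
    exact Stmt3.sub₂ (Stmt3.sesOf_shortExact g hg) X i
      ((hB _).mp hker i hi) ((hB _).mp hN i hi)
  -- the backward direction, by dimension shifting
  have back : ∀ (m i : ℕ), 0 < i → n < i + m → ∀ (M : ModuleCat.{u} R)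
      (E : ℕ → ModuleCat.{u} R), (∀ j, Acl (E j) ∧ B (E j)) →
      ∀ (d : ∀ j : ℕ, E (j + 1) →ₗ[R] E j) (e : E 0 →ₗ[R] M),
      Function.Surjective e → Function.Exact (d 0) e →
      (∀ j : ℕ, Function.Exact (d (j + 1)) (d j)) → Subsingleton (Ext X M i) := by
    intro m
    induction m with
    | zero => intro i hi hni M E hE d e hs he hd; exact hpd M i (by omega)
    | succ m ih =>
      intro i hi hni M E hE d e hs he hd
      by_cases hn : n < i
      · exact hpd M i hn
      · -- dimension shift to the kernel of `e`
        set e' : E 1 →ₗ[R] ModuleCat.of R (LinearMap.ker e) :=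
          (d 0).codRestrict (LinearMap.ker e) (fun x => he.apply_apply_eq_zero x) with he'def
        have hs' : Function.Surjective e' := by
          rintro ⟨y, hy⟩
          obtain ⟨w, hw⟩ := (he y).mp hy
          exact ⟨w, Subtype.ext hw⟩
        have hex' : Function.Exact (d 1) e' := by
          intro y
          have hiff : (e' y = 0) ↔ (d 0 y = 0) := by
            constructor
            · intro h
              exact congrArg Subtype.val h
            · intro h
              exact Subtype.ext h
          rw [hiff]
          exact hd 0 y
        have hK : Subsingleton (Ext X (ModuleCat.of R (LinearMap.ker e)) (i + 1)) :=
          ih (i + 1) (by omega) (by omega) _ (fun j => E (j + 1)) (fun j => hE (j + 1))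
            (fun j => d (j + 1)) e' hs' hex' (fun j => hd (j + 1))
        exact Stmt3.sub₃ (Stmt3.sesOf_shortExact e hs) X i
          ((hB _).mp (hE 0).2 i hi) hK
  have part1 : ∀ M : ModuleCat.{u} R, B M ↔
      ∃ (E : ℕ → ModuleCat.{u} R) (_ : ∀ j, Acl (E j) ∧ B (E j))
        (d : ∀ j : ℕ, E (j + 1) →ₗ[R] E j) (e : E 0 →ₗ[R] M),
        Function.Surjective e ∧ Function.Exact (d 0) e ∧
          ∀ j : ℕ, Function.Exact (d (j + 1)) (d j) := by
    intro M
    constructor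
    · intro hM
      set P : ModuleCat.{u} R → ModuleCat.{u} R := fun N => (hcomplete N).choose with hP
      set g : ∀ N : ModuleCat.{u} R, P N →ₗ[R] N :=
        fun N => (hcomplete N).choose_spec.choose with hgdef
      have hg : ∀ N, Function.Surjective (g N) ∧ Acl (P N) ∧
          B (ModuleCat.of R (LinearMap.ker (g N))) :=
        fun N => (hcomplete N).choose_spec.choose_spec
      set seq : ℕ → ModuleCat.{u} R :=
        fun j => Nat.rec M (fun _ N => ModuleCat.of R (LinearMap.ker (g N))) j with hseq
      have hBseq : ∀ j, B (seq j) := by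
        intro j
        induction j with
        | zero => exact hM
        | succ j _ => exact (hg (seq j)).2.2
      set dd : ∀ j, P (seq (j + 1)) →ₗ[R] P (seq j) :=
        fun j => (LinearMap.ker (g (seq j))).subtype.comp (g (seq (j + 1))) with hdd
      have key : ∀ (j : ℕ) (y : P (seq j)), g (seq j) y = 0 ↔ y ∈ Set.range (dd j) := by
        intro j y
        constructor
        · intro h
          obtain ⟨w, hw⟩ := (hg (seq (j + 1))).1 (⟨y, h⟩ : LinearMap.ker (g (seq j)))
          refine ⟨w, ?_⟩
          show ((LinearMap.ker (g (seq j))).subtype) (g (seq (j + 1)) w) = y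
          rw [hw]
          rfl
        · rintro ⟨w, rfl⟩
          exact (g (seq (j + 1)) w : LinearMap.ker (g (seq j))).2
      refine ⟨fun j => P (seq j),
        fun j => ⟨(hg (seq j)).2.1, extcl (g (seq j)) (hg (seq j)).1 (hg (seq j)).2.2 (hBseq j)⟩,
        dd, g (seq 0), (hg (seq 0)).1, fun y => key 0 y, fun j y => ?_⟩
      have : dd j y = 0 ↔ g (seq (j + 1)) y = 0 := by
        show (LinearMap.ker (g (seq j))).subtype (g (seq (j + 1)) y) = 0 ↔ _
        rw [Submodule.subtype_apply, ZeroMemClass.coe_eq_zero]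
      rw [this]
      exact key (j + 1) y
    · rintro ⟨E, hE, d, e, hs, he, hd⟩
      rw [hB]
      intro i hi
      exact back (n + 1) i hi (by omega) M E hE d e hs he hd
  refine ⟨part1, ?_⟩
  intro hcl ι f hf
  choose E hE d e hs he hd using fun i => (part1 (f i)).mp (hf i)
  refine (part1 _).mpr ⟨fun j => ModuleCat.of R (DirectSum ι (fun i => ↥(E i j))),
    fun j => hcl ι (fun i => E i j) (fun i => hE i j),
    fun j => DFinsupp.mapRange.linearMap (fun i => d i j),
    DFinsupp.mapRange.linearMap (fun i => e i),
    Stmt3.mapRange_surjective _ hs,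
    Stmt3.mapRange_exact _ _ (fun i => he i),
    fun j => Stmt3.mapRange_exact _ _ (fun i => hd i j)⟩
end

section
/- Let R be a ring, X a module with B = X^{⊥∞} such that {}^{⊥1}B ∩ B = Add(X) and the cotorsion pair ({}^{⊥1}B, B) is complete, and suppose every module in {}^{⊥1}B has projective dimension at most n. Then every projective R-module P admits an exact sequence 0 → P → Z_0 → Z_1 → ... → Z_{n-1} → Z_n → 0 with every Z_i ∈ Add(X). -/
/-!
Take a special `B`-preenvelope `0 → M → N → M' → 0` of `M` with `M' ∈ ⊥¹B`. Since `⊥¹B` is closed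
under extensions, `N ∈ ⊥¹B ∩ B = Add X` whenever `M ∈ ⊥¹B`, and since `N ∈ B = X^{⊥∞}` the long
exact sequence gives `Ext^{i}(X, M') ≅ Ext^{i+1}(X, M)` for `i > 0`. Starting from `M = P`, which lies
in `⊥¹B` and satisfies `Ext^{i}(X, P) = 0` for `i > n` because `X ∈ ⊥¹B` has projective dimension at
most `n`, after `n` iterations the last cokernel lies in `⊥¹B ∩ X^{⊥∞} = Add X`.
-/

open CategoryTheory Limits CategoryTheory.Abelian

universe u

section ShortExact

variable {C : Type*} [Category C] [Abelian C] [HasExt.{u} C] {S : ShortComplex C}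

lemma subsingleton_ext_X₃_of_shortExact (hS : S.ShortExact) (X : C) (m : ℕ)
    (h₂ : Subsingleton (Ext X S.X₂ m)) (h₁ : Subsingleton (Ext X S.X₁ (m + 1))) :
    Subsingleton (Ext X S.X₃ m) := by
  refine subsingleton_of_forall_eq 0 fun x => ?_
  obtain ⟨x₂, rfl⟩ := Ext.covariant_sequence_exact₃ X hS x rfl (Subsingleton.elim _ 0)
  rw [Subsingleton.elim x₂ 0, Ext.zero_comp]

lemma subsingleton_ext_X₂_of_shortExact (hS : S.ShortExact) (Y : C) (m : ℕ)
    (h₁ : Subsingleton (Ext S.X₁ Y m)) (h₃ : Subsingleton (Ext S.X₃ Y m)) :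
    Subsingleton (Ext S.X₂ Y m) := by
  refine subsingleton_of_forall_eq 0 fun x => ?_
  obtain ⟨x₃, rfl⟩ := Ext.contravariant_sequence_exact₂ hS Y x (Subsingleton.elim _ 0)
  rw [Subsingleton.elim x₃ 0, Ext.comp_zero]

end ShortExact

section Coresolution

variable {R : Type u} [Ring R]

lemma ModuleCat.shortExact_mkQ_range {M N : ModuleCat.{u} R} {f : M →ₗ[R] N}
    (hf : Function.Injective f) :
    (ModuleCat.shortComplexOfCompEqZero f (LinearMap.range f).mkQ
      f.exact_map_mkQ_range.linearMap_comp_eq_zero).ShortExact :=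
  ModuleCat.shortComplex_shortExact _ f.exact_map_mkQ_range hf (Submodule.mkQ_surjective _)

/-- An exact sequence `0 → M → Z 0 → ⋯ → Z k → 0` with all `Z j` in the class `C`; the maps
`d j` for `j ≥ k` are irrelevant. -/
def HasCoresolution (C : ModuleCat.{u} R → Prop) (k : ℕ) (M : ModuleCat.{u} R) : Prop :=
  ∃ (Z : ℕ → ModuleCat.{u} R) (d : ∀ j : ℕ, Z j →ₗ[R] Z (j + 1)) (f : M →ₗ[R] Z 0),
    (∀ j ≤ k, C (Z j)) ∧ Function.Injective f ∧
    (0 < k → Function.Exact f (d 0)) ∧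
    (∀ j : ℕ, j + 2 ≤ k → Function.Exact (d j) (d (j + 1))) ∧
    (0 < k → Function.Surjective (d (k - 1))) ∧
    (k = 0 → Function.Surjective f)

variable {C : ModuleCat.{u} R → Prop}

lemma hasCoresolution_zero {M : ModuleCat.{u} R} (hM : C M) : HasCoresolution C 0 M :=
  ⟨fun _ => M, fun _ => LinearMap.id, LinearMap.id, fun _ _ => hM, Function.injective_id,
    by omega, by omega, by omega, fun _ => Function.surjective_id⟩

lemma HasCoresolution.of_injective {k : ℕ} {M N : ModuleCat.{u} R} {e : M →ₗ[R] N}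
    (he : Function.Injective e) (hN : C N)
    (h : HasCoresolution C k (ModuleCat.of R (N ⧸ LinearMap.range e))) :
    HasCoresolution C (k + 1) M := by
  obtain ⟨Z, d, f, hZ, hf, hexact₀, hexact, hsurj, hsurj₀⟩ := h
  refine ⟨fun j => Nat.casesOn j N Z,
    fun j => Nat.casesOn (motive := fun j => (Nat.casesOn j N Z : ModuleCat.{u} R) →ₗ[R]
      (Nat.casesOn (j + 1) N Z : ModuleCat.{u} R)) j (f ∘ₗ (LinearMap.range e).mkQ) d,
    e, ?_, he, fun _ => ?_, ?_, fun _ => ?_, by omega⟩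
  · rintro (_ | j) hj
    exacts [hN, hZ j (by omega)]
  · exact hf.comp_exact_iff_exact.mpr e.exact_map_mkQ_range
  · rintro (_ | j) hj
    exacts [(Submodule.mkQ_surjective _).comp_exact_iff_exact.mpr (hexact₀ (by omega)),
      hexact j (by omega)]
  · rcases k with _ | k
    exacts [(hsurj₀ rfl).comp (Submodule.mkQ_surjective _), hsurj (by omega)]

theorem hasCoresolution_of_subsingleton_ext [HasExt.{u} (ModuleCat.{u} R)] {X : ModuleCat.{u} R}
    {B AddX perp1 : ModuleCat.{u} R → Prop}
    (hBdef : ∀ N, B N ↔ ∀ i : ℕ, 0 < i → Subsingleton (Ext X N i))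
    (hperp1 : ∀ Y, perp1 Y ↔ ∀ C, B C → Subsingleton (Ext Y C 1))
    (hker : ∀ Y, (perp1 Y ∧ B Y) ↔ AddX Y)
    (hpreenv : ∀ M : ModuleCat.{u} R, ∃ (N : ModuleCat.{u} R) (f : M →ₗ[R] N),
      Function.Injective f ∧ B N ∧ perp1 (ModuleCat.of R (↥N ⧸ LinearMap.range f)))
    (k : ℕ) (M : ModuleCat.{u} R) (hM : perp1 M)
    (hext : ∀ i : ℕ, 0 < i → Subsingleton (Ext X M (i + k))) :
    HasCoresolution AddX k M := by
  induction k generalizing M with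
  | zero => exact hasCoresolution_zero ((hker M).mp ⟨hM, (hBdef M).mpr hext⟩)
  | succ k ih =>
    obtain ⟨N, e, he, hN, hQ⟩ := hpreenv M
    have hS := ModuleCat.shortExact_mkQ_range he
    have hpN : perp1 N := (hperp1 N).mpr fun C hC =>
      subsingleton_ext_X₂_of_shortExact hS C 1 ((hperp1 M).mp hM C hC) ((hperp1 _).mp hQ C hC)
    refine .of_injective he ((hker N).mp ⟨hpN, hN⟩) (ih _ hQ fun i hi => ?_)
    exact subsingleton_ext_X₃_of_shortExact hS X (i + k) ((hBdef N).mp hN _ (by omega))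
      (hext i hi)

end Coresolution

theorem stmt5_general {R : Type u} [Ring R] [HasExt.{u} (ModuleCat.{u} R)]
    (n : ℕ) (X : ModuleCat.{u} R)
    (B AddX perp1 : ModuleCat.{u} R → Prop)
    (hBdef : ∀ N, B N ↔ ∀ i : ℕ, 0 < i → Subsingleton (Ext X N i))
    (hAdd : ∀ Y, AddX Y ↔ ∃ (ι : Type u) (s : Y →ₗ[R] (ι →₀ ↥X)) (p : (ι →₀ ↥X) →ₗ[R] Y),
      p.comp s = LinearMap.id)
    (hperp1 : ∀ Y, perp1 Y ↔ ∀ C, B C → Subsingleton (Ext Y C 1))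
    (hker : ∀ Y, (perp1 Y ∧ B Y) ↔ AddX Y)
    (hpreenv : ∀ M : ModuleCat.{u} R, ∃ (N : ModuleCat.{u} R) (f : M →ₗ[R] N),
      Function.Injective f ∧ B N ∧ perp1 (ModuleCat.of R (↥N ⧸ LinearMap.range f)))
    (hpd : ∀ Y, perp1 Y → ∀ (N : ModuleCat.{u} R) (i : ℕ), n < i → Subsingleton (Ext Y N i)) :
    ∀ P : ModuleCat.{u} R, Projective P →
      ∃ (Z : ℕ → ModuleCat.{u} R) (d : ∀ j : ℕ, Z j →ₗ[R] Z (j + 1)) (f : P →ₗ[R] Z 0),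
        (∀ j ≤ n, AddX (Z j)) ∧ Function.Injective f ∧
        (0 < n → Function.Exact f (d 0)) ∧
        (∀ j : ℕ, j + 2 ≤ n → Function.Exact (d j) (d (j + 1))) ∧
        (0 < n → Function.Surjective (d (n - 1))) ∧
        (n = 0 → Function.Surjective f) := by
  intro P hP
  have hAddX : AddX X := (hAdd X).mpr
    ⟨PUnit, Finsupp.lsingle PUnit.unit, Finsupp.lapply PUnit.unit, by ext; simp⟩
  have hpX : perp1 X := ((hker X).mpr hAddX).1
  have hpP : perp1 P := (hperp1 P).mpr fun C _ => Ext.subsingleton_of_projective P C 0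
  exact hasCoresolution_of_subsingleton_ext hBdef hperp1 hker hpreenv n P hpP
    fun i _ => hpd X hpX P (i + n) (by omega)

/-- Let `X` be a module with `B = X^{⊥∞}`, `^{⊥1}B ∩ B = Add(X)`, the
cotorsion pair `(^{⊥1}B, B)` complete, and suppose every module in `^{⊥1}B` has projective
dimension at most `n`.  Then every projective `R`-module `P` admits an exact sequence
`0 → P → Z_0 → Z_1 → ... → Z_{n-1} → Z_n → 0` with every `Z_i ∈ Add(X)`. -/
theorem stmt5 {R : Type u} [Ring R] [HasExt.{u} (ModuleCat.{u} R)]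
    (n : ℕ) (X : ModuleCat.{u} R)
    (B AddX perp1 : ModuleCat.{u} R → Prop)
    (hBdef : ∀ N, B N ↔ ∀ i : ℕ, 0 < i → Subsingleton (Ext X N i))
    (hAdd : ∀ Y, AddX Y ↔ ∃ (ι : Type u) (s : Y →ₗ[R] (ι →₀ ↥X)) (p : (ι →₀ ↥X) →ₗ[R] Y),
      p.comp s = LinearMap.id)
    (hperp1 : ∀ Y, perp1 Y ↔ ∀ C, B C → Subsingleton (Ext Y C 1))
    (hker : ∀ Y, (perp1 Y ∧ B Y) ↔ AddX Y)
    (hpreenv : ∀ M : ModuleCat.{u} R, ∃ (N : ModuleCat.{u} R) (f : M →ₗ[R] N),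
      Function.Injective f ∧ B N ∧ perp1 (ModuleCat.of R (↥N ⧸ LinearMap.range f)))
    (hprecov : ∀ M : ModuleCat.{u} R, ∃ (P : ModuleCat.{u} R) (g : P →ₗ[R] M),
      Function.Surjective g ∧ perp1 P ∧ B (ModuleCat.of R (LinearMap.ker g)))
    (hpd : ∀ Y, perp1 Y → ∀ (N : ModuleCat.{u} R) (i : ℕ), n < i → Subsingleton (Ext Y N i)) :
    ∀ P : ModuleCat.{u} R, Projective P →
      ∃ (Z : ℕ → ModuleCat.{u} R) (d : ∀ j : ℕ, Z j →ₗ[R] Z (j + 1)) (f : P →ₗ[R] Z 0),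
        (∀ j ≤ n, AddX (Z j)) ∧ Function.Injective f ∧
        (0 < n → Function.Exact f (d 0)) ∧
        (∀ j : ℕ, j + 2 ≤ n → Function.Exact (d j) (d (j + 1))) ∧
        (0 < n → Function.Surjective (d (n - 1))) ∧
        (n = 0 → Function.Surjective f) :=
  stmt5_general n X B AddX perp1 hBdef hAdd hperp1 hker hpreenv hpd
end

section
/- Let A be a ring and T an n-silting A-module with respect to a projective n-presentation Σ (so Pres^{n-1}(T) = D_Σ). Then the subcategory Σ^{⊥ℤ} = {Y ∈ D(A) | Hom_{D(A)}(Σ, Y[i]) = 0 for all i ∈ ℤ} contains no nonzero A-module. -/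
open CategoryTheory Limits DerivedCategory

universe u

/-! A module `M` in `Σ^{⊥ℤ}` lies in `D_Σ = Pres^{n-1}(T) ⊆ Gen(T)`, so it is a quotient of some
`T^(ι)`. But `Hom_A(T, M) ≅ Hom_{D(A)}(Σ, M[0]) = 0`, so that quotient map vanishes and `M = 0`. -/

namespace CochainComplex

variable {C : Type*} [Category C] [Abelian C]

/-- Since `d⁰ = 0`, `H⁰(K)` is the cokernel of `d⁻¹`, so a map out of it extends to a chain map. -/
noncomputable def homFromHomologyZeroToSingle (K : CochainComplex C ℤ) (hK : K.d 0 1 = 0) {X : C}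
    (g : K.homology 0 ⟶ X) : K ⟶ (HomologicalComplex.single C (ComplexShape.up ℤ) 0).obj X :=
  HomologicalComplex.mkHomToSingle (K.pOpcycles 0 ≫ (K.isoHomologyι 0 1 (by simp) hK).inv ≫ g)
    fun i _ => by rw [HomologicalComplex.d_pOpcycles_assoc, zero_comp]

lemma homologyMap_homFromHomologyZeroToSingle (K : CochainComplex C ℤ) (hK : K.d 0 1 = 0)
    {X : C} (g : K.homology 0 ⟶ X) :
    HomologicalComplex.homologyMap (K.homFromHomologyZeroToSingle hK g) 0 ≫
      (HomologicalComplex.singleObjHomologySelfIso (ComplexShape.up ℤ) 0 X).hom = g := by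
  rw [← HomologicalComplex.homologyι_singleObjOpcyclesSelfIso_inv, ← Category.assoc,
    HomologicalComplex.homologyι_naturality, Category.assoc,
    ← cancel_epi (K.isoHomologyι 0 1 (by simp) hK).inv,
    HomologicalComplex.isoHomologyι_inv_hom_id_assoc, ← cancel_epi (K.pOpcycles 0),
    HomologicalComplex.p_opcyclesMap_assoc]
  simp [homFromHomologyZeroToSingle]

variable [HasDerivedCategory C]

lemma homologyMap_eq_zero_of_Q_map_eq_zero {K L : CochainComplex C ℤ} (f : K ⟶ L)
    (hf : Q.map f = 0) (n : ℤ) : HomologicalComplex.homologyMap f n = 0 := by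
  have h := homologyFunctorFactors_hom_naturality f n
  rw [hf, Functor.map_zero, zero_comp] at h
  exact (cancel_epi ((homologyFunctorFactors C n).app K).hom).1 (h.symm.trans comp_zero.symm)

lemma homology_hom_eq_zero_of_forall_Q_hom_eq_zero (K : CochainComplex C ℤ) (hK : K.d 0 1 = 0)
    {X : C} (h : ∀ φ : Q.obj K ⟶ (DerivedCategory.singleFunctor C 0).obj X, φ = 0)
    (g : K.homology 0 ⟶ X) : g = 0 := by
  have hQ : Q.map (K.homFromHomologyZeroToSingle hK g) = 0 :=
    (cancel_mono ((singleFunctorIsoCompQ C 0).inv.app X)).1 (by simp [h])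
  rw [← K.homologyMap_homFromHomologyZeroToSingle hK g,
    homologyMap_eq_zero_of_Q_map_eq_zero _ hQ, zero_comp]

end CochainComplex

lemma Module.subsingleton_of_surjective_of_forall_linearMap_eq_zero {A : Type*} [Ring A]
    {T M : Type*} [AddCommGroup T] [Module A T] [AddCommGroup M] [Module A M] {ι : Type*}
    (f : (ι →₀ T) →ₗ[A] M) (hf : Function.Surjective f) (h : ∀ g : T →ₗ[A] M, g = 0) :
    Subsingleton M := by
  have hf0 : f = 0 := Finsupp.lhom_ext' fun i => h _
  refine ⟨fun a b => ?_⟩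
  obtain ⟨a, rfl⟩ := hf a
  obtain ⟨b, rfl⟩ := hf b
  simp [hf0]

theorem stmt6_general {A : Type u} [Ring A] [HasDerivedCategory.{u} (ModuleCat.{u} A)]
    (n : ℕ) (hn : 0 < n) (S : CochainComplex (ModuleCat.{u} A) ℤ)
    (hSb : ∀ i : ℤ, (i < -(n : ℤ) ∨ 0 < i) → IsZero (S.X i))
    (T : ModuleCat.{u} A) (hT : Nonempty ((S.homology 0) ≅ T))
    (hsilting : ∀ M : ModuleCat.{u} A,
      (∃ (C : ℕ → ModuleCat.{u} A)
          (d : ∀ j : ℕ, C (j + 1) →ₗ[A] C j) (e : C 0 →ₗ[A] M),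
        (∀ j < n, ∃ (ι : Type u) (s : C j →ₗ[A] (ι →₀ ↥T)) (p : (ι →₀ ↥T) →ₗ[A] C j),
          p.comp s = LinearMap.id) ∧
        Function.Surjective e ∧ (2 ≤ n → Function.Exact (d 0) e) ∧
        (∀ j : ℕ, j + 3 ≤ n → Function.Exact (d (j + 1)) (d j))) ↔
      (∀ i : ℤ, 0 < i →
        ∀ φ : Q.obj S ⟶ ((singleFunctor (ModuleCat.{u} A) 0).obj M)⟦i⟧, φ = 0)) :
    ∀ M : ModuleCat.{u} A,
      (∀ i : ℤ, ∀ φ : Q.obj S ⟶ ((singleFunctor (ModuleCat.{u} A) 0).obj M)⟦i⟧, φ = 0) →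
      IsZero M := by
  intro M hM
  have hT_M : ∀ g : T →ₗ[A] M, g = 0 := fun g => by
    have hQ : ∀ φ : Q.obj S ⟶ (singleFunctor (ModuleCat.{u} A) 0).obj M, φ = 0 := fun φ =>
      (cancel_mono ((shiftFunctorZero _ ℤ).app _).inv).1 ((hM 0 _).trans zero_comp.symm)
    have hg := S.homology_hom_eq_zero_of_forall_Q_hom_eq_zero
      ((hSb 1 (Or.inr one_pos)).eq_of_tgt _ _) hQ (hT.some.hom ≫ ModuleCat.ofHom g)
    simpa using congrArg ModuleCat.Hom.hom ((cancel_epi hT.some.hom).1 (hg.trans comp_zero.symm))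
  obtain ⟨C, -, e, hsummand, he, -, -⟩ := (hsilting M).mpr fun i _ => hM i
  obtain ⟨ι, s, p, hps⟩ := hsummand 0 hn
  have hp : Function.Surjective p := Function.RightInverse.surjective (LinearMap.congr_fun hps)
  have := Module.subsingleton_of_surjective_of_forall_linearMap_eq_zero (e ∘ₗ p)
    (he.comp hp) hT_M
  exact ModuleCat.isZero_of_subsingleton M

/-- Let `T` be an `n`-silting `A`-module with respect to a projective
`n`-presentation `S` (i.e. `Pres^{n-1}(T) = D_S`).  Then
`S^{⊥ℤ} = {Y | Hom_{D(A)}(S, Y[i]) = 0 ∀ i ∈ ℤ}` contains no nonzero `A`-module. -/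
theorem stmt6 {A : Type u} [Ring A] [HasDerivedCategory.{u} (ModuleCat.{u} A)]
    (n : ℕ) (hn : 0 < n) (S : CochainComplex (ModuleCat.{u} A) ℤ)
    (hSb : ∀ i : ℤ, (i < -(n : ℤ) ∨ 0 < i) → IsZero (S.X i))
    (hSp : ∀ i : ℤ, Projective (S.X i))
    (T : ModuleCat.{u} A) (hT : Nonempty ((S.homology 0) ≅ T))
    (hsilting : ∀ M : ModuleCat.{u} A,
      (∃ (C : ℕ → ModuleCat.{u} A)
          (d : ∀ j : ℕ, C (j + 1) →ₗ[A] C j) (e : C 0 →ₗ[A] M),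
        (∀ j < n, ∃ (ι : Type u) (s : C j →ₗ[A] (ι →₀ ↥T)) (p : (ι →₀ ↥T) →ₗ[A] C j),
          p.comp s = LinearMap.id) ∧
        Function.Surjective e ∧ (2 ≤ n → Function.Exact (d 0) e) ∧
        (∀ j : ℕ, j + 3 ≤ n → Function.Exact (d (j + 1)) (d j))) ↔
      (∀ i : ℤ, 0 < i →
        ∀ φ : Q.obj S ⟶ ((singleFunctor (ModuleCat.{u} A) 0).obj M)⟦i⟧, φ = 0)) :
    ∀ M : ModuleCat.{u} A,
      (∀ i : ℤ, ∀ φ : Q.obj S ⟶ ((singleFunctor (ModuleCat.{u} A) 0).obj M)⟦i⟧, φ = 0) →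
      IsZero M :=
  stmt6_general n hn S hSb T hT hsilting
end

section
/- Let A be a ring and C an n-cosilting A-module with respect to an injective n-copresentation Ω (so Copres^{n-1}(C) = B_Ω). Then the subcategory {}^{⊥ℤ}Ω = {Y ∈ D(A) | Hom_{D(A)}(Y, Ω[i]) = 0 for all i ∈ ℤ} contains no nonzero A-module. -/
open CategoryTheory Limits DerivedCategory

universe u

/-!
Every morphism `M ⟶ H⁰(W)` lifts to a chain map from `M[0]` to `W` (there are no boundaries in
degree `0`), and a chain map out of a single complex is detected by its effect on homology; so the
vanishing of `Hom_{D(A)}(M, W)` forces `Hom_A(M, C) = 0`. On the other hand `M ∈ B_W` is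
`C`-copresented, hence embeds in a direct summand of a product of copies of `C`, so `M = 0`.
-/

namespace HomologicalComplex

variable {V : Type*} [Category V] [HasZeroMorphisms V] [HasZeroObject V] [CategoryWithHomology V]
  {ι : Type*} [DecidableEq ι] {c : ComplexShape ι}

lemma eq_zero_of_homologyMap_eq_zero {K : HomologicalComplex V c} {i j : ι} (hij : c.prev j = i)
    (hK : K.d i j = 0) {A : V} {ψ : (single V c j).obj A ⟶ K} (hψ : homologyMap ψ j = 0) :
    ψ = 0 := by
  have := K.isIso_homologyπ i j hij hK
  have := ((single V c j).obj A).isIso_iCycles j _ rfl (by simp)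
  have hcycles : cyclesMap ψ j = 0 := by
    rw [← cancel_mono (K.homologyπ j), ← homologyπ_naturality, hψ, comp_zero, zero_comp]
  ext
  rw [← cancel_epi (((single V c j).obj A).iCycles j), ← cyclesMap_i, hcycles]
  simp

end HomologicalComplex

namespace DerivedCategory

variable {C : Type*} [Category C] [Abelian C] [HasDerivedCategory C]

lemma homologyMap_eq_zero_of_Q_map_eq_zero {K L : CochainComplex C ℤ} {φ : K ⟶ L}
    (hφ : Q.map φ = 0) (n : ℤ) : HomologicalComplex.homologyMap φ n = 0 := by
  refine (cancel_epi ((homologyFunctorFactors C n).hom.app K)).1 ?_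
  rw [← homologyFunctorFactors_hom_naturality, hφ, Functor.map_zero, zero_comp]
  exact comp_zero.symm

lemma hom_homology_eq_zero_of_forall_singleFunctor_hom_eq_zero {K : CochainComplex C ℤ}
    {i n : ℤ} (hin : i + 1 = n) (hK : K.d i n = 0) {M : C}
    (hM : ∀ φ : (singleFunctor C n).obj M ⟶ Q.obj K, φ = 0) (g : M ⟶ K.homology n) :
    g = 0 := by
  have hprev : (ComplexShape.up ℤ).prev n = i := ComplexShape.prev_eq' _ hin
  let lift : M ⟶ K.X n := g ≫ (K.isoHomologyπ i n hprev hK).inv ≫ K.iCycles n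
  let ψ := HomologicalComplex.mkHomFromSingle lift (fun k _ => by simp [lift])
  have hψ : ψ = 0 := HomologicalComplex.eq_zero_of_homologyMap_eq_zero hprev hK
    (homologyMap_eq_zero_of_Q_map_eq_zero (hM (Q.map ψ)) n)
  have hlift : lift = 0 := by
    simpa [ψ] using HomologicalComplex.congr_hom hψ n
  rw [← cancel_mono ((K.isoHomologyπ i n hprev hK).inv ≫ K.iCycles n), zero_comp]
  exact hlift

end DerivedCategory

lemma LinearMap.subsingleton_of_injective_pi_of_forall_eq_zero {R M N ι : Type*}
    [Semiring R] [AddCommMonoid M] [Module R M] [AddCommMonoid N] [Module R N]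
    (f : M →ₗ[R] ι → N) (hf : Function.Injective f) (h : ∀ g : M →ₗ[R] N, g = 0) :
    Subsingleton M := by
  have hf0 : ∀ x, f x = 0 := fun x => funext fun k => congr($(h (LinearMap.proj k ∘ₗ f)) x)
  exact ⟨fun x y => hf (by rw [hf0, hf0])⟩

theorem stmt8_general {A : Type u} [Ring A] [HasDerivedCategory.{u} (ModuleCat.{u} A)]
    (n : ℕ) (hn : 0 < n) (W : CochainComplex (ModuleCat.{u} A) ℤ)
    (hWb : ∀ i : ℤ, (i < 0 ∨ (n : ℤ) < i) → IsZero (W.X i))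
    (C : ModuleCat.{u} A) (hC : Nonempty ((W.homology 0) ≅ C))
    (hcosilting : ∀ M : ModuleCat.{u} A,
      (∃ (E : ℕ → ModuleCat.{u} A)
          (d : ∀ j : ℕ, E j →ₗ[A] E (j + 1)) (f : M →ₗ[A] E 0),
        (∀ j < n, ∃ (ι : Type u) (s : E j →ₗ[A] (ι → ↥C)) (p : (ι → ↥C) →ₗ[A] E j),
          p.comp s = LinearMap.id) ∧
        Function.Injective f ∧ (2 ≤ n → Function.Exact f (d 0)) ∧
        (∀ j : ℕ, j + 3 ≤ n → Function.Exact (d j) (d (j + 1)))) ↔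
      (∀ i : ℤ, 0 < i →
        ∀ φ : ((singleFunctor (ModuleCat.{u} A) 0).obj M) ⟶ (Q.obj W)⟦i⟧, φ = 0)) :
    ∀ M : ModuleCat.{u} A,
      (∀ i : ℤ, ∀ φ : ((singleFunctor (ModuleCat.{u} A) 0).obj M) ⟶ (Q.obj W)⟦i⟧, φ = 0) →
      IsZero M := by
  intro M hM
  obtain ⟨e⟩ := hC
  have hM₀ : ∀ φ : (singleFunctor (ModuleCat.{u} A) 0).obj M ⟶ Q.obj W, φ = 0 := fun φ =>
    (cancel_mono ((shiftFunctorZero _ ℤ).inv.app _)).1 (by rw [zero_comp]; exact hM 0 _)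
  have hMC : ∀ g : M ⟶ C, g = 0 := fun g => by
    rw [← cancel_mono e.inv, zero_comp]
    exact hom_homology_eq_zero_of_forall_singleFunctor_hom_eq_zero (neg_add_cancel 1)
      ((hWb (-1) (Or.inl (by norm_num))).eq_of_src _ _) hM₀ _
  obtain ⟨E, -, f, hsummand, hf, -, -⟩ := (hcosilting M).2 fun i _ φ => hM i φ
  obtain ⟨ι, s, p, hps⟩ := hsummand 0 hn
  have hs : Function.Injective s :=
    Function.LeftInverse.injective (g := p) (LinearMap.congr_fun hps)
  have := LinearMap.subsingleton_of_injective_pi_of_forall_eq_zero (s ∘ₗ f) (hs.comp hf)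
    fun g => congr(ModuleCat.Hom.hom $(hMC (ModuleCat.ofHom g)))
  exact ModuleCat.isZero_of_subsingleton M

/-- Let `C` be an `n`-cosilting `A`-module with respect to an injective
`n`-copresentation `W` (i.e. `Copres^{n-1}(C) = B_W`).  Then
`^{⊥ℤ}W = {Y | Hom_{D(A)}(Y, W[i]) = 0 ∀ i ∈ ℤ}` contains no nonzero `A`-module. -/
theorem stmt8 {A : Type u} [Ring A] [HasDerivedCategory.{u} (ModuleCat.{u} A)]
    (n : ℕ) (hn : 0 < n) (W : CochainComplex (ModuleCat.{u} A) ℤ)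
    (hWb : ∀ i : ℤ, (i < 0 ∨ (n : ℤ) < i) → IsZero (W.X i))
    (hWinj : ∀ i : ℤ, Injective (W.X i))
    (hWE : ∀ i : ℤ, 0 < i → i < (n : ℤ) → IsZero (W.homology i))
    (C : ModuleCat.{u} A) (hC : Nonempty ((W.homology 0) ≅ C))
    (hcosilting : ∀ M : ModuleCat.{u} A,
      (∃ (E : ℕ → ModuleCat.{u} A)
          (d : ∀ j : ℕ, E j →ₗ[A] E (j + 1)) (f : M →ₗ[A] E 0),
        (∀ j < n, ∃ (ι : Type u) (s : E j →ₗ[A] (ι → ↥C)) (p : (ι → ↥C) →ₗ[A] E j),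
          p.comp s = LinearMap.id) ∧
        Function.Injective f ∧ (2 ≤ n → Function.Exact f (d 0)) ∧
        (∀ j : ℕ, j + 3 ≤ n → Function.Exact (d j) (d (j + 1)))) ↔
      (∀ i : ℤ, 0 < i →
        ∀ φ : ((singleFunctor (ModuleCat.{u} A) 0).obj M) ⟶ (Q.obj W)⟦i⟧, φ = 0)) :
    ∀ M : ModuleCat.{u} A,
      (∀ i : ℤ, ∀ φ : ((singleFunctor (ModuleCat.{u} A) 0).obj M) ⟶ (Q.obj W)⟦i⟧, φ = 0) →
      IsZero M :=
  stmt8_general n hn W hWb C hC hcosilting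
end

section
/- Let A be a commutative noetherian local ring in which first syzygy modules (of finitely generated modules) are closed under extensions. If k^n (n ≥ 1) is a third syzygy of a finitely generated A-module, then k itself is a third syzygy of some finitely generated A-module. -/
universe u

/-- `NthSyzygy A m N` : the module `N` is an `m`-th syzygy of a finitely generated
`A`-module, defined by iterating embeddings into finite free modules. -/
def NthSyzygy (A : Type u) [Ring A] : ℕ → ModuleCat.{u} A → Prop
  | 0, N => Module.Finite A N
  | m + 1, N => ∃ (r : ℕ) (M : ModuleCat.{u} A), NthSyzygy A m M ∧
      ∃ (f : N →ₗ[A] (Fin r → A)) (g : (Fin r → A) →ₗ[A] M),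
        Function.Injective f ∧ Function.Surjective g ∧ Function.Exact f g

/-!
Write `0 → kⁿ → Aʳ →g M → 0` and `0 → M →f₂ A^r₂ → M₁ → 0`, and `d = f₂ ∘ g`. The image `V` of
`kⁿ` lies in the socle of `Aʳ`; since `k` embeds in `Aʳ`, every finite module killed by the
maximal ideal `𝔪` is a first syzygy.

For `0 ≠ v ∈ V`, `Aʳ/Av` is an extension of `M` by `V/Av`, so `Av` is the kernel of a map between
free modules. Such kernels are stable under applying an endomorphism of the socle of `A`
coordinatewise, which forces `soc A = A u` for any nonzero coordinate `u = vᵢ`. Writing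
`v = u • x` with `xᵢ = 1`, the map `a ↦ a • d x` has kernel `A u ≅ k`, and its cokernel
`A^r₂/A (d x)` is an extension of `M₁` by `Aʳ/(Ax + V)`. The latter is an extension of
`Aʳ/(Ax + soc Aʳ)`, which embeds in a free module by multiplication with generators of `𝔪`, by a
module killed by `𝔪`.
-/

open Function LinearMap Submodule IsLocalRing

namespace NthSyzygy

variable {A : Type u} [CommRing A] {X : Type u} [AddCommGroup X] [Module A X]

theorem one_iff {N : ModuleCat.{u} A} :
    NthSyzygy A 1 N ↔ ∃ (r : ℕ) (ψ : N →ₗ[A] (Fin r → A)), Injective ψ := by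
  refine ⟨fun ⟨r, _, _, ψ, _, hψ, _⟩ => ⟨r, ψ, hψ⟩, fun ⟨r, ψ, hψ⟩ => ?_⟩
  exact ⟨r, .of A ((Fin r → A) ⧸ range ψ), Module.Finite.quotient A _, ψ, (range ψ).mkQ, hψ,
    mkQ_surjective _, exact_iff.mpr (ker_mkQ _)⟩

theorem one_of_injective_pi {ι : Type} [Finite ι] (ψ : X →ₗ[A] (ι → A)) (hψ : Injective ψ) :
    NthSyzygy A 1 (.of A X) :=
  let e := LinearEquiv.funCongrLeft A A (Finite.equivFin ι).symm
  one_iff.mpr ⟨Nat.card ι, e.toLinearMap ∘ₗ ψ, e.injective.comp hψ⟩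

theorem one_of_injective {N : ModuleCat.{u} A} (ψ : X →ₗ[A] N) (hψ : Injective ψ)
    (hN : NthSyzygy A 1 N) : NthSyzygy A 1 (.of A X) := by
  obtain ⟨r, φ, hφ⟩ := one_iff.mp hN
  exact one_iff.mpr ⟨r, φ ∘ₗ ψ, hφ.comp hψ⟩

theorem one_pi (ι : Type) [Finite ι] (hX : NthSyzygy A 1 (.of A X)) :
    NthSyzygy A 1 (.of A (ι → X)) := by
  obtain ⟨r, ψ, hψ⟩ := one_iff.mp hX
  let e := (LinearEquiv.curry A A ι (Fin r)).symm
  exact one_of_injective_pi (e.toLinearMap ∘ₗ ψ.compLeft ι) (e.injective.comp hψ.comp_left)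

theorem succ_of_exact [Nontrivial A] {m : ℕ} {F : Type u} [AddCommGroup F] [Module A F]
    [Module.Free A F] [Module.Finite A F] {N : ModuleCat.{u} A}
    (f : X →ₗ[A] F) (g : F →ₗ[A] N) (hf : Injective f) (hg : Surjective g) (hfg : Exact f g)
    (hN : NthSyzygy A m N) : NthSyzygy A (m + 1) (.of A X) := by
  let e := (Module.finBasis A F).equivFun
  exact ⟨_, N, hN, e.toLinearMap ∘ₗ f, g ∘ₗ e.symm.toLinearMap, e.injective.comp hf,
    hg.comp e.symm.surjective, (e.conj_exact_iff_exact f g).mpr hfg⟩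

theorem succ_succ_of_exact [Nontrivial A] {m : ℕ} {F G : Type u} [AddCommGroup F] [Module A F]
    [Module.Free A F] [Module.Finite A F] [AddCommGroup G] [Module A G] [Module.Free A G]
    [Module.Finite A G] (f : X →ₗ[A] F) (g : F →ₗ[A] G) (hf : Injective f) (hfg : Exact f g)
    (hZ : NthSyzygy A m (.of A (G ⧸ range g))) : NthSyzygy A (m + 2) (.of A X) := by
  refine succ_of_exact (N := .of A (F ⧸ ker g)) f (ker g).mkQ hf (mkQ_surjective _)
    (exact_iff.mpr ?_) ?_
  · rw [ker_mkQ, hfg.linearMap_ker_eq]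
  refine succ_of_exact (N := .of A (G ⧸ range g)) ((ker g).liftQ g le_rfl) (range g).mkQ ?_
    (mkQ_surjective _) (exact_iff.mpr ?_) hZ
  · exact ker_eq_bot.mp (ker_liftQ_eq_bot' _ _ rfl)
  · rw [ker_mkQ, range_liftQ]

end NthSyzygy

/- `φ` acts through its matrix, which commutes with the `A`-linear map `α`. -/
theorem LinearMap.map_compLeft_eq_zero {A : Type*} [CommRing A] {ι κ : Type*} [Fintype ι]
    (φ : (ι → A) →ₗ[A] (κ → A)) {I : Ideal A} (α : I →ₗ[A] A) {y : ι → I}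
    (hy : φ (I.subtype.compLeft ι y) = 0) : φ (α.compLeft ι y) = 0 := by
  classical
  ext l
  set c : ι → A := fun i => φ (fun j => if i = j then 1 else 0) l
  have hsum : ∀ z : ι → A, φ z l = ∑ i, z i * c i := fun z => by
    conv_lhs => rw [pi_apply_eq_sum_univ φ z]
    simp only [Finset.sum_apply, Pi.smul_apply, smul_eq_mul, c]
  have hyl : ∑ i, c i • y i = 0 := by
    apply Subtype.ext
    have := congrFun hy l
    rw [hsum] at this
    simpa [mul_comm] using this
  rw [Pi.zero_apply, hsum]
  simpa [mul_comm] using congrArg α hyl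

theorem exists_isIdempotentElem_ker_eq_span {A M : Type*} [CommRing A] [AddCommGroup M]
    [Module A M] (φ : M →ₗ[A] A) {x : M} (hx : φ x = 1) :
    ∃ p : M →ₗ[A] M, IsIdempotentElem p ∧ ker p = span A {x} := by
  refine ⟨LinearMap.id - φ.smulRight x, LinearMap.ext fun y => by simp [hx], le_antisymm
    (fun y hy => mem_span_singleton.mpr ⟨φ y, ?_⟩) ?_⟩
  · rw [mem_ker, LinearMap.sub_apply, sub_eq_zero] at hy
    exact hy.symm
  rw [span_singleton_le_iff_mem, mem_ker]
  simp [hx]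

section Socle

variable {A : Type u} [CommRing A] [IsLocalRing A]
  {M : Type*} [AddCommGroup M] [Module A M] {N : Type*} [AddCommGroup N] [Module A N]

variable (A M) in
def socle : Submodule A M := torsionBySet A M (maximalIdeal A)

theorem mem_socle {x : M} : x ∈ socle A M ↔ ∀ a ∈ maximalIdeal A, a • x = 0 := by
  simp [socle, mem_torsionBySet_iff]

theorem map_socle_le (f : M →ₗ[A] N) : (socle A M).map f ≤ socle A N := by
  rintro _ ⟨x, hx, rfl⟩
  exact mem_socle.mpr fun a ha => by rw [← map_smul, mem_socle.mp hx a ha, map_zero]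

theorem isTorsionBySet_of_le_socle {P : Submodule A M} (hP : P ≤ socle A M) :
    Module.IsTorsionBySet A P (maximalIdeal A) :=
  fun x a => Subtype.ext (mem_socle.mp (hP x.2) a a.2)

theorem ker_pi_smul_eq_socle {ι : Type*} {a : ι → A}
    (ha : span A (Set.range a) = maximalIdeal A) :
    ker (LinearMap.pi fun i => a i • (LinearMap.id : M →ₗ[A] M)) = socle A M := by
  ext x
  have : (∀ i, a i • x = 0) ↔ maximalIdeal A ≤ ker (toSpanSingleton A M x) := by
    rw [← ha, span_le, Set.range_subset_iff]; rfl
  simpa [funext_iff, mem_socle, SetLike.le_def] using this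

theorem socle_pi_residueField (ι : Type*) : socle A (ι → ResidueField A) = ⊤ :=
  eq_top_iff.mpr fun z _ => mem_socle.mpr fun a ha => by
    ext j
    simp [Algebra.smul_def, (residue_eq_zero_iff a).mpr ha]

theorem Module.IsTorsionBySet.exists_linearMap_apply_eq {X : Type*} [AddCommGroup X]
    [Module A X] (hX : Module.IsTorsionBySet A X (maximalIdeal A)) {x : X} (hx : x ≠ 0)
    (y : X) : ∃ α : X →ₗ[A] X, α x = y := by
  let _ : Module (ResidueField A) X := hX.module
  have : IsScalarTower A (ResidueField A) X := hX.isScalarTower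
  obtain ⟨α, -, hα⟩ := LinearMap.exists_extend_of_notMem
    (0 : (⊥ : Submodule (ResidueField A) X) →ₗ[ResidueField A] X) (by simpa using hx) y
  exact ⟨α.restrictScalars A, hα⟩

theorem Module.IsTorsionBySet.exists_linearEquiv_pi_residueField {X : Type*} [AddCommGroup X]
    [Module A X] [Module.Finite A X] (hX : Module.IsTorsionBySet A X (maximalIdeal A)) :
    ∃ d : ℕ, Nonempty (X ≃ₗ[A] (Fin d → ResidueField A)) := by
  let _ : Module (ResidueField A) X := hX.module
  have : IsScalarTower A (ResidueField A) X := hX.isScalarTower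
  have := Module.Finite.of_restrictScalars_finite A (ResidueField A) X
  exact ⟨_, ⟨(Module.finBasis (ResidueField A) X).equivFun.restrictScalars A⟩⟩

noncomputable def residueFieldToSpanSingleton (x : M) (hx : x ∈ socle A M) :
    ResidueField A →ₗ[A] M :=
  (maximalIdeal A).liftQ (toSpanSingleton A M x) fun a ha => by
    exact mem_socle.mp hx a ha

theorem range_residueFieldToSpanSingleton (x : M) (hx : x ∈ socle A M) :
    range (residueFieldToSpanSingleton x hx) = span A {x} :=
  (range_liftQ _ _ _).trans (span_singleton_eq_range A M x).symm

theorem residueFieldToSpanSingleton_injective {x : M} (hx : x ∈ socle A M) (hx0 : x ≠ 0) :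
    Injective (residueFieldToSpanSingleton x hx) := by
  refine ker_eq_bot.mp (ker_liftQ_eq_bot _ _ _ fun a (ha : a • x = 0) => ?_)
  by_contra hna
  obtain ⟨b, hb⟩ := (notMem_maximalIdeal.mp hna).exists_left_inv
  exact hx0 (by rw [← one_smul A x, ← hb, mul_smul, ha, smul_zero])

theorem NthSyzygy.residueField_of_ker_toSpanSingleton {m : ℕ} {s : A} (hs : s ∈ socle A A)
    (hs0 : s ≠ 0) {G : Type u} [AddCommGroup G] [Module A G] [Module.Free A G]
    [Module.Finite A G] {y : G} (hy : ker (toSpanSingleton A G y) = span A {s})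
    (hZ : NthSyzygy A m (.of A (G ⧸ span A {y}))) :
    NthSyzygy A (m + 2) (.of A (ResidueField A)) := by
  refine succ_succ_of_exact (residueFieldToSpanSingleton s hs) (toSpanSingleton A G y)
    (residueFieldToSpanSingleton_injective hs hs0) (exact_iff.mpr ?_) ?_
  · rw [hy, range_residueFieldToSpanSingleton]
  · rwa [← LinearMap.span_singleton_eq_range]

theorem exists_smul_eq_of_socle_eq_span {ι : Type*} {v : ι → A} (hv : v ∈ socle A (ι → A))
    {i : ι} (hsoc : socle A A = span A {v i}) : ∃ x : ι → A, x i = 1 ∧ v i • x = v := by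
  classical
  have hcoord : ∀ j, ∃ c : A, c • v i = v j := fun j =>
    mem_span_singleton.mp (hsoc ▸ map_socle_le (proj j) ⟨v, hv, rfl⟩)
  choose c hc using hcoord
  refine ⟨Function.update c i 1, by simp, funext fun j => ?_⟩
  rcases eq_or_ne j i with rfl | hj
  · simp
  · simp [hj, ← hc j, mul_comm]

theorem smul_mem_iff_mem_span_of_le_socle {ι : Type*} {V : Submodule A (ι → A)}
    (hV : V ≤ socle A (ι → A)) {x : ι → A} {i : ι} (hxi : x i = 1) {u : A} (hux : u • x ∈ V)
    (hsoc : socle A A = span A {u}) (a : A) : a • x ∈ V ↔ a ∈ span A {u} := by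
  refine ⟨fun ha => ?_, fun ha => ?_⟩
  · simpa [← hsoc, hxi] using map_socle_le (proj i) ⟨_, hV ha, rfl⟩
  · obtain ⟨c, rfl⟩ := mem_span_singleton.mp ha
    simpa [mul_smul] using V.smul_mem c hux

theorem NthSyzygy.one_of_isTorsionBySet (hk : NthSyzygy A 1 (.of A (ResidueField A)))
    {X : Type u} [AddCommGroup X] [Module A X] [Module.Finite A X]
    (hX : Module.IsTorsionBySet A X (maximalIdeal A)) : NthSyzygy A 1 (.of A X) := by
  obtain ⟨d, ⟨e⟩⟩ := hX.exists_linearEquiv_pi_residueField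
  exact one_of_injective e.toLinearMap e.injective (one_pi (Fin d) hk)

theorem socle_eq_span_of_nthSyzygy_quotient {r : ℕ} {v : Fin r → A}
    (hv : v ∈ socle A (Fin r → A)) {i : Fin r} (hvi : v i ≠ 0)
    (hC : NthSyzygy A 1 (.of A ((Fin r → A) ⧸ span A {v}))) :
    socle A A = span A {v i} := by
  have hcoord : ∀ j, v j ∈ socle A A := fun j => map_socle_le (proj j) ⟨v, hv, rfl⟩
  refine le_antisymm (fun w hw => ?_) ((span_singleton_le_iff_mem _ _).mpr (hcoord i))
  obtain ⟨s, ψ, hψ⟩ := NthSyzygy.one_iff.mp hC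
  have hker : ker (ψ ∘ₗ (span A {v}).mkQ) = span A {v} := by
    rw [ker_comp, ker_eq_bot.mpr hψ, comap_bot, ker_mkQ]
  let y : Fin r → socle A A := fun j => ⟨v j, hcoord j⟩
  obtain ⟨α, hα⟩ := (isTorsionBySet_of_le_socle le_rfl).exists_linearMap_apply_eq (x := y i)
    (by simpa [y, Subtype.ext_iff] using hvi) ⟨w, hw⟩
  have hαy : ((socle A A).subtype ∘ₗ α).compLeft (Fin r) y ∈ span A {v} := by
    rw [← hker, mem_ker]
    refine map_compLeft_eq_zero _ _ ?_
    rw [← mem_ker, hker]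
    exact mem_span_singleton_self v
  obtain ⟨c, hc⟩ := mem_span_singleton.mp hαy
  exact mem_span_singleton.mpr ⟨c, by simpa [y, hα] using congrFun hc i⟩

end Socle

def SyzygiesClosedUnderExtensions (A : Type u) [Ring A] : Prop :=
  ∀ (N₁ L N₂ : ModuleCat.{u} A) (f : N₁ →ₗ[A] L) (g : L →ₗ[A] N₂),
    Injective f → Surjective g → Exact f g → Module.Finite A L →
    NthSyzygy A 1 N₁ → NthSyzygy A 1 N₂ → NthSyzygy A 1 L

namespace SyzygiesClosedUnderExtensions

theorem quotient_span_map {A : Type u} [CommRing A] (hA : SyzygiesClosedUnderExtensions A)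
    {E F : Type u} [AddCommGroup E] [Module A E] [AddCommGroup F] [Module A F] [Module.Finite A F]
    {N : ModuleCat.{u} A} (d : E →ₗ[A] F) (g : F →ₗ[A] N) (hg : Surjective g)
    (hdg : Exact d g) (x : E) (hE : NthSyzygy A 1 (.of A (E ⧸ (span A {x} ⊔ ker d))))
    (hN : NthSyzygy A 1 N) : NthSyzygy A 1 (.of A (F ⧸ span A {d x})) := by
  have hker : ker ((span A {d x}).mkQ ∘ₗ d) = span A {x} ⊔ ker d := by
    rw [ker_comp, ker_mkQ, ← Set.image_singleton, ← Submodule.map_span, comap_map_eq]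
  have hle : span A {d x} ≤ ker g := by
    rw [span_singleton_le_iff_mem, hdg.linearMap_ker_eq]
    exact mem_range_self d x
  refine hA (.of A (E ⧸ (span A {x} ⊔ ker d))) (.of A (F ⧸ span A {d x})) N
    ((span A {x} ⊔ ker d).liftQ _ hker.ge) ((span A {d x}).liftQ g hle)
    (ker_eq_bot.mp (ker_liftQ_eq_bot' _ _ hker.symm)) (hg.of_comp (g := (span A {d x}).mkQ))
    (exact_iff.mpr ?_) (Module.Finite.quotient A _) hE hN
  rw [ker_liftQ, range_liftQ, range_comp, hdg.linearMap_ker_eq]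

variable {A : Type u} [CommRing A] [IsNoetherianRing A] [IsLocalRing A]
  {F : Type u} [AddCommGroup F] [Module A F] [Module.Finite A F]

theorem quotient (hA : SyzygiesClosedUnderExtensions A)
    (hk : NthSyzygy A 1 (.of A (ResidueField A))) {N : ModuleCat.{u} A} (g : F →ₗ[A] N)
    (hg : Surjective g) {K : Submodule A F} (hK : K ≤ ker g)
    (hsoc : (ker g).map K.mkQ ≤ socle A (F ⧸ K)) (hN : NthSyzygy A 1 N) :
    NthSyzygy A 1 (.of A (F ⧸ K)) :=
  hA (.of A ((ker g).map K.mkQ)) (.of A (F ⧸ K)) N ((ker g).map K.mkQ).subtype (K.liftQ g hK)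
    Subtype.val_injective (hg.of_comp (g := K.mkQ))
    (exact_iff.mpr (by rw [ker_liftQ, range_subtype])) (Module.Finite.quotient A K)
    (NthSyzygy.one_of_isTorsionBySet hk (isTorsionBySet_of_le_socle hsoc)) hN

theorem quotient_of_ker_le_socle (hA : SyzygiesClosedUnderExtensions A)
    (hk : NthSyzygy A 1 (.of A (ResidueField A))) {N : ModuleCat.{u} A} (g : F →ₗ[A] N)
    (hg : Surjective g) (hgsoc : ker g ≤ socle A F) (hN : NthSyzygy A 1 N)
    {K : Submodule A F} (hK : K ≤ ker g) : NthSyzygy A 1 (.of A (F ⧸ K)) :=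
  hA.quotient hk g hg hK ((map_mono hgsoc).trans (map_socle_le _)) hN

/- `F ⧸ comap p (socle F)` embeds in `Fin g → F` through `y ↦ (aᵢ • p y)ᵢ`, where the `aᵢ`
generate the maximal ideal; since `y - p y ∈ ker p`, what lies between is killed by it. -/
theorem quotient_ker_sup (hA : SyzygiesClosedUnderExtensions A)
    (hk : NthSyzygy A 1 (.of A (ResidueField A))) (hF : NthSyzygy A 1 (.of A F))
    {p : F →ₗ[A] F} (hp : IsIdempotentElem p) {V : Submodule A F} (hV : V ≤ socle A F) :
    NthSyzygy A 1 (.of A (F ⧸ (ker p ⊔ V))) := by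
  obtain ⟨g, a, ha⟩ := fg_iff_exists_fin_generating_family.mp
    (IsNoetherian.noetherian (maximalIdeal A))
  let Ψ := (LinearMap.pi fun i => a i • LinearMap.id) ∘ₗ p
  have hΨ : ker Ψ.rangeRestrict = (socle A F).comap p := by
    rw [ker_rangeRestrict, ker_comp, ker_pi_smul_eq_socle ha]
  refine hA.quotient hk Ψ.rangeRestrict Ψ.surjective_rangeRestrict ?_ ?_
    (NthSyzygy.one_of_injective (range Ψ).subtype Subtype.val_injective (hF.one_pi (Fin g)))
  · rw [hΨ]
    refine sup_le (fun y hy => ?_) (hV.trans fun y hy => map_socle_le p ⟨y, hy, rfl⟩)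
    simp [mem_ker.mp hy, zero_mem]
  · rw [hΨ]
    rintro _ ⟨y, hy, rfl⟩
    have hyp : (ker p ⊔ V).mkQ y = (ker p ⊔ V).mkQ (p y) := by
      rw [mkQ_apply, mkQ_apply, Submodule.Quotient.eq]
      refine mem_sup_left (mem_ker.mpr ?_)
      rw [map_sub, ← Module.End.mul_apply, hp.eq, sub_self]
    rw [hyp]
    exact map_socle_le _ ⟨p y, hy, rfl⟩

end SyzygiesClosedUnderExtensions

/-- Let `A` be a commutative noetherian local ring in which first syzygy
modules of finitely generated modules are closed under extensions.  If `k^n` (`n ≥ 1`) is a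
third syzygy of a finitely generated `A`-module, then `k` itself is a third syzygy. -/
theorem stmt12 {A : Type u} [CommRing A] [IsNoetherianRing A] [IsLocalRing A]
    (hext : ∀ (N₁ L N₂ : ModuleCat.{u} A) (f : N₁ →ₗ[A] L) (g : L →ₗ[A] N₂),
      Function.Injective f → Function.Surjective g → Function.Exact f g →
      Module.Finite A L →
      NthSyzygy A 1 N₁ → NthSyzygy A 1 N₂ → NthSyzygy A 1 L)
    (n : ℕ) (hn : 1 ≤ n)
    (h : NthSyzygy A 3 (ModuleCat.of A (Fin n → IsLocalRing.ResidueField A))) :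
    NthSyzygy A 3 (ModuleCat.of A (IsLocalRing.ResidueField A)) := by
  have hA : SyzygiesClosedUnderExtensions A := hext
  obtain ⟨r, M, hM, f, g, hf, hg, hfg⟩ := h
  obtain ⟨r₂, M₁, hM₁, f₂, g₂, hf₂, hg₂, hfg₂⟩ := hM
  have hfree : NthSyzygy A 1 (.of A (Fin r → A)) :=
    NthSyzygy.one_iff.mpr ⟨r, LinearMap.id, injective_id⟩
  have hk : NthSyzygy A 1 (.of A (ResidueField A)) :=
    NthSyzygy.one_of_injective (LinearMap.single A (fun _ : Fin n => ResidueField A) ⟨0, hn⟩)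
      (fun _ _ => (Pi.single_injective _).eq_iff.mp)
      (NthSyzygy.one_iff.mpr ⟨r, f, hf⟩)
  have hV : ker g ≤ socle A (Fin r → A) := by
    rw [hfg.linearMap_ker_eq, range_eq_map, ← socle_pi_residueField]
    exact map_socle_le f
  obtain ⟨v, hvV, hv0⟩ : ∃ v ∈ ker g, v ≠ 0 :=
    ⟨f (Pi.single ⟨0, hn⟩ 1), hfg.apply_apply_eq_zero _, by simp [map_eq_zero_iff f hf]⟩
  obtain ⟨i, hi⟩ := Function.ne_iff.mp hv0
  have hsoc := socle_eq_span_of_nthSyzygy_quotient (hV hvV) hi <|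
    hA.quotient_of_ker_le_socle hk g hg hV (NthSyzygy.one_iff.mpr ⟨r₂, f₂, hf₂⟩)
      ((span_singleton_le_iff_mem _ _).mpr hvV)
  obtain ⟨x, hxi, hvx⟩ := exists_smul_eq_of_socle_eq_span (hV hvV) hsoc
  obtain ⟨p, hp, hkerp⟩ :=
    exists_isIdempotentElem_ker_eq_span (proj i : (Fin r → A) →ₗ[A] A) hxi
  let d := f₂ ∘ₗ g
  have hkerd : ker d = ker g := by rw [ker_comp, ker_eq_bot.mpr hf₂, comap_bot]
  have hZ := hA.quotient_span_map d g₂ hg₂ (hg.comp_exact_iff_exact.mpr hfg₂) x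
    (hkerp ▸ hkerd ▸ hA.quotient_ker_sup hk hfree hp hV) hM₁
  refine NthSyzygy.residueField_of_ker_toSpanSingleton (hsoc.ge (mem_span_singleton_self _)) hi
    ?_ hZ
  ext a
  rw [mem_ker, toSpanSingleton_apply, ← map_smul, ← mem_ker, hkerd,
    smul_mem_iff_mem_span_of_le_socle hV hxi (by rwa [hvx]) hsoc]
end
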